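/- The symmetries satisfy the covariance relation λ_g ∘ s_{g'} = s_{g^{-1}g'} ∘ λ_g, where λ_g(h) = g^{-1}h is left translation by g^{-1} on G. -/
import Mathlib

open Real
noncomputable section

abbrev G (d : ℕ) := ℝ × ((Fin d → ℝ) × (Fin d → ℝ)) × ℝ

/-- The standard symplectic form on ℝ^{2d}, with v = (n, m). -/
def omega0 {d : ℕ} (v w : (Fin d → ℝ) × (Fin d → ℝ)) : ℝ :=
  ∑ i, (v.1 i * w.2 i - v.2 i * w.1 i)

/-- The group law (a,v,t)(a',v',t') = (a+a', e^{-a'}v+v', e^{-2a'}t+t'+(1/2)e^{-a'}ω₀(v,v')). -/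
def gmul {d : ℕ} (g h : G d) : G d :=
  (g.1 + h.1, Real.exp (-h.1) • g.2.1 + h.2.1,
    Real.exp (-(2 * h.1)) * g.2.2 + h.2.2 + (1/2) * Real.exp (-h.1) * omega0 g.2.1 h.2.1)

/-- The identity element (0,0,0). -/
def gone {d : ℕ} : G d := (0, 0, 0)

/-- The inverse (a,v,t)^{-1} = (-a, -e^a v, -e^{2a} t). -/
def ginv {d : ℕ} (g : G d) : G d :=
  (-g.1, -(Real.exp g.1 • g.2.1), -(Real.exp (2 * g.1) * g.2.2))

/-- The symmetry s_g at the point g. -/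
def ssym {d : ℕ} (g g' : G d) : G d :=
  (2 * g.1 - g'.1, (2 * Real.cosh (g.1 - g'.1)) • g.2.1 - g'.2.1,
    2 * g.2.2 * Real.cosh (2 * g.1 - 2 * g'.1) - g'.2.2
      + omega0 g.2.1 g'.2.1 * Real.sinh (g.1 - g'.1))

/-- The two-point phase S(g₁,g₂). -/
def Sph {d : ℕ} (g₁ g₂ : G d) : ℝ :=
  Real.sinh (2 * g₁.1) * g₂.2.2 - Real.sinh (2 * g₂.1) * g₁.2.2
    + Real.cosh g₁.1 * Real.cosh g₂.1 * omega0 g₁.2.1 g₂.2.1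

/-- The two-point amplitude A(g₁,g₂). -/
def Aamp {d : ℕ} (g₁ g₂ : G d) : ℝ :=
  (Real.cosh g₁.1 * Real.cosh g₂.1 * Real.cosh (g₁.1 - g₂.1)) ^ d *
    Real.sqrt (Real.cosh (2 * g₁.1) * Real.cosh (2 * g₂.1) * Real.cosh (2 * g₁.1 - 2 * g₂.1))

/-- The two-point kernel K_θ(g₁,g₂) = (4/(πθ)^{2d+2}) A(g₁,g₂) exp((2i/θ) S(g₁,g₂)). -/
def Kker {d : ℕ} (θ : ℝ) (g₁ g₂ : G d) : ℂ :=
  (4 / (Real.pi * θ) ^ (2 * d + 2) : ℝ) * (Aamp g₁ g₂ : ℝ) *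
    Complex.exp ((2 * Complex.I / (θ : ℂ)) * (Sph g₁ g₂ : ℝ))


lemma omega0_expand {d : ℕ} (v w : (Fin d → ℝ) × (Fin d → ℝ)) :
    omega0 v w = ∑ i, v.1 i * w.2 i - ∑ i, v.2 i * w.1 i := by
  rw [omega0, Finset.sum_sub_distrib]

lemma omega0_add_left {d : ℕ} (v w x : (Fin d → ℝ) × (Fin d → ℝ)) :
    omega0 (v + w) x = omega0 v x + omega0 w x := by
  simp only [omega0_expand, Prod.fst_add, Prod.snd_add, Pi.add_apply, add_mul,
    Finset.sum_add_distrib]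
  ring

lemma omega0_add_right {d : ℕ} (v x y : (Fin d → ℝ) × (Fin d → ℝ)) :
    omega0 v (x + y) = omega0 v x + omega0 v y := by
  simp only [omega0_expand, Prod.fst_add, Prod.snd_add, Pi.add_apply, mul_add,
    Finset.sum_add_distrib]
  ring

lemma omega0_smul_left {d : ℕ} (c : ℝ) (v x : (Fin d → ℝ) × (Fin d → ℝ)) :
    omega0 (c • v) x = c * omega0 v x := by
  simp only [omega0_expand, Prod.smul_fst, Prod.smul_snd, Pi.smul_apply, smul_eq_mul,
    mul_assoc, ← Finset.mul_sum]
  ring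

lemma omega0_smul_right {d : ℕ} (c : ℝ) (v x : (Fin d → ℝ) × (Fin d → ℝ)) :
    omega0 v (c • x) = c * omega0 v x := by
  simp only [omega0_expand, Prod.smul_fst, Prod.smul_snd, Pi.smul_apply, smul_eq_mul]
  simp only [show ∀ p q r : ℝ, p * (q * r) = q * (p * r) from fun p q r => by ring,
    ← Finset.mul_sum]
  ring

lemma omega0_neg_left {d : ℕ} (v x : (Fin d → ℝ) × (Fin d → ℝ)) :
    omega0 (-v) x = -omega0 v x := by
  simp only [omega0_expand, Prod.fst_neg, Prod.snd_neg, Pi.neg_apply, neg_mul,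
    Finset.sum_neg_distrib]
  ring

lemma omega0_neg_right {d : ℕ} (v x : (Fin d → ℝ) × (Fin d → ℝ)) :
    omega0 v (-x) = -omega0 v x := by
  simp only [omega0_expand, Prod.fst_neg, Prod.snd_neg, Pi.neg_apply, mul_neg,
    Finset.sum_neg_distrib]
  ring

lemma omega0_self {d : ℕ} (v : (Fin d → ℝ) × (Fin d → ℝ)) : omega0 v v = 0 := by
  simp [omega0_expand, mul_comm]

lemma omega0_antisymm {d : ℕ} (v w : (Fin d → ℝ) × (Fin d → ℝ)) :
    omega0 w v = -omega0 v w := by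
  rw [omega0, omega0, ← Finset.sum_neg_distrib]
  exact Finset.sum_congr rfl fun i _ => by ring

lemma exp_two_mul' (x : ℝ) : Real.exp (2 * x) = Real.exp x * Real.exp x := by
  rw [two_mul, Real.exp_add]

theorem ssym_covariance (d : ℕ) (g g' h : G d) :
    gmul (ginv g) (ssym g' h) = ssym (gmul (ginv g) g') (gmul (ginv g) h) := by
  obtain ⟨a, v, t⟩ := g
  obtain ⟨b, w, s⟩ := g'
  obtain ⟨c, u, r⟩ := h
  refine Prod.ext ?_ (Prod.ext (Prod.ext ?_ ?_) ?_)
  · simp [gmul, ginv, ssym]; ring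
  · funext i
    simp only [gmul, ginv, ssym, Prod.fst_add, Prod.snd_add, Prod.fst_sub, Prod.snd_sub,
      Prod.smul_fst, Prod.smul_snd, Prod.fst_neg, Prod.snd_neg, Pi.add_apply, Pi.sub_apply,
      Pi.smul_apply, Pi.neg_apply, smul_eq_mul]
    simp only [Real.cosh_eq, exp_two_mul', Real.exp_sub, Real.exp_add, Real.exp_neg]
    field_simp
    ring
  · funext i
    simp only [gmul, ginv, ssym, Prod.fst_add, Prod.snd_add, Prod.fst_sub, Prod.snd_sub,
      Prod.smul_fst, Prod.smul_snd, Prod.fst_neg, Prod.snd_neg, Pi.add_apply, Pi.sub_apply,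
      Pi.smul_apply, Pi.neg_apply, smul_eq_mul]
    simp only [Real.cosh_eq, exp_two_mul', Real.exp_sub, Real.exp_add, Real.exp_neg]
    field_simp
    ring
  · simp only [gmul, ginv, ssym, smul_smul, neg_smul, smul_neg, sub_eq_add_neg, neg_neg]
    simp only [omega0_add_left, omega0_add_right, omega0_neg_left, omega0_neg_right,
      omega0_smul_left, omega0_smul_right, omega0_self]
    simp only [omega0_antisymm w v, omega0_antisymm u v, omega0_antisymm u w]
    generalize omega0 v w = P
    generalize omega0 v u = Q
    generalize omega0 w u = R
    simp only [Real.cosh_eq, Real.sinh_eq, exp_two_mul', Real.exp_sub, Real.exp_add, Real.exp_neg]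
    field_simp
    ring
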